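/- Let γ ∈ (-2, 0). Define for nonzero X ∈ ℝ³: b(X) = -2|X|^γ X and σ(X) = |X|^{γ/2−1}(|X|² I − X⊗X). Then for all nonzero X, Y ∈ ℝ³: (X − Y)·(b(X) − b(Y)) + ‖σ(X) − σ(Y)‖² ≤ 2 |X − Y|² (min(|X|,|Y|))^{1+γ} / max(|X|,|Y|), where ‖·‖ is the Frobenius norm. -/

import Mathlib

open Matrix

noncomputable section

/-- Frobenius norm of a 3×3 real matrix. -/
def frob (M : Matrix (Fin 3) (Fin 3) ℝ) : ℝ := Real.sqrt (Matrix.trace (M * Mᵀ))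

/-- The Landau drift kernel `b(X) = -2 |X|^γ X`. -/
def bKer (γ : ℝ) (X : EuclideanSpace ℝ (Fin 3)) : EuclideanSpace ℝ (Fin 3) :=
  (-2 * ‖X‖ ^ γ) • X

/-- The matrix `σ(X) = |X|^{γ/2 - 1} (|X|² I − X ⊗ X)`. -/
def sigmaMat (γ : ℝ) (X : EuclideanSpace ℝ (Fin 3)) : Matrix (Fin 3) (Fin 3) ℝ :=
  ‖X‖ ^ (γ / 2 - 1) •
    (‖X‖ ^ 2 • (1 : Matrix (Fin 3) (Fin 3) ℝ) - Matrix.of fun i j => X i * X j)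

/-! With `a = |X|`, `b = |Y|`, `c = X·Y`, the drift term contributes `-2a^{γ+2} - 2b^{γ+2}`,
which cancels the diagonal part `‖σ(X)‖² + ‖σ(Y)‖²`, and in dimension three
`⟨⟨σ(X), σ(Y)⟩⟩ = a^{γ/2-1} b^{γ/2-1} (a²b² + c²)`. Hence the left-hand side is
`2(a^γ + b^γ)c - 2a^{γ/2-1} b^{γ/2-1} (a²b² + c²)`.

Say `b ≤ a` and put `u = a^{γ/2}`, `v = b^{γ/2}`; for `γ ∈ [-2, 0]` this gives `u ≤ v` and
`b v ≤ a u`. After multiplication by `ab/2` the claim is polynomial: the left side is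
`abc(v-u)² - uv(ab-c)² ≤ a²b²(v-u)² ≤ b²((a-b)v)²`, and `(a-b)² ≤ a² + b² - 2c = |X-Y|²`. -/

lemma landau_poly_le {a b c u v : ℝ} (ha : 0 ≤ a) (hb : 0 ≤ b) (hu : 0 ≤ u) (huv : u ≤ v)
    (hc : c ≤ a * b) (hbv : b * v ≤ a * u) :
    a * b * (u ^ 2 + v ^ 2) * c - u * v * (a ^ 2 * b ^ 2 + c ^ 2) ≤
      (a ^ 2 + b ^ 2 - 2 * c) * (b * v) ^ 2 := by
  have hgap : 0 ≤ a * (v - u) := mul_nonneg ha (sub_nonneg.2 huv)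
  calc a * b * (u ^ 2 + v ^ 2) * c - u * v * (a ^ 2 * b ^ 2 + c ^ 2)
      = a * b * c * (v - u) ^ 2 - u * v * (a * b - c) ^ 2 := by ring
    _ ≤ a * b * c * (v - u) ^ 2 := by
        have : 0 ≤ u * v * (a * b - c) ^ 2 := by have := hu.trans huv; positivity
        linarith
    _ ≤ (a * b) * (a * b) * (v - u) ^ 2 := by gcongr
    _ = b ^ 2 * (a * (v - u)) ^ 2 := by ring
    _ ≤ b ^ 2 * ((a - b) * v) ^ 2 := by
        gcongr b ^ 2 * ?_
        exact pow_le_pow_left₀ hgap (by linarith) 2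
    _ = (a - b) ^ 2 * (b * v) ^ 2 := by ring
    _ ≤ (a ^ 2 + b ^ 2 - 2 * c) * (b * v) ^ 2 := by gcongr; nlinarith

lemma rpow_half_sq {a : ℝ} (ha : 0 ≤ a) (γ : ℝ) : (a ^ (γ / 2)) ^ 2 = a ^ γ := by
  rw [← Real.rpow_mul_natCast ha]; norm_num

lemma landau_rpow_le_of_le {γ a b c : ℝ} (hγ₁ : -2 ≤ γ) (hγ₂ : γ ≤ 0) (hb : 0 < b) (hba : b ≤ a)
    (hc : c ≤ a * b) :
    2 * (a ^ γ + b ^ γ) * c - 2 * (a ^ (γ / 2 - 1) * b ^ (γ / 2 - 1)) * (a ^ 2 * b ^ 2 + c ^ 2) ≤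
      2 * (a ^ 2 + b ^ 2 - 2 * c) * b ^ (1 + γ) / a := by
  have ha : 0 < a := hb.trans_le hba
  set u := a ^ (γ / 2)
  set v := b ^ (γ / 2)
  have huv : u ≤ v := Real.rpow_le_rpow_of_nonpos hb hba (by linarith)
  have hbv : b * v ≤ a * u := by
    simpa only [u, v, Real.rpow_add ha, Real.rpow_add hb, Real.rpow_one] using
      Real.rpow_le_rpow hb.le hba (by linarith : 0 ≤ 1 + γ / 2)
  have key := landau_poly_le ha.le hb.le (Real.rpow_nonneg ha.le _) huv hc hbv
  have hub : a ^ (γ / 2 - 1) = u / a := by rw [Real.rpow_sub ha, Real.rpow_one]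
  have hvb : b ^ (γ / 2 - 1) = v / b := by rw [Real.rpow_sub hb, Real.rpow_one]
  have hbγ : b ^ (1 + γ) = b * v ^ 2 := by rw [Real.rpow_add hb, Real.rpow_one, rpow_half_sq hb.le]
  rw [← rpow_half_sq ha.le, ← rpow_half_sq hb.le, hub, hvb, hbγ]
  calc 2 * (u ^ 2 + v ^ 2) * c - 2 * (u / a * (v / b)) * (a ^ 2 * b ^ 2 + c ^ 2)
      = 2 / (a * b) * (a * b * (u ^ 2 + v ^ 2) * c - u * v * (a ^ 2 * b ^ 2 + c ^ 2)) := by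
        field_simp
    _ ≤ 2 / (a * b) * ((a ^ 2 + b ^ 2 - 2 * c) * (b * v) ^ 2) := by gcongr
    _ = 2 * (a ^ 2 + b ^ 2 - 2 * c) * (b * v ^ 2) / a := by field_simp

lemma landau_rpow_le {γ a b c : ℝ} (hγ₁ : -2 ≤ γ) (hγ₂ : γ ≤ 0) (ha : 0 < a) (hb : 0 < b)
    (hc : c ≤ a * b) :
    2 * (a ^ γ + b ^ γ) * c - 2 * (a ^ (γ / 2 - 1) * b ^ (γ / 2 - 1)) * (a ^ 2 * b ^ 2 + c ^ 2) ≤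
      2 * (a ^ 2 + b ^ 2 - 2 * c) * min a b ^ (1 + γ) / max a b := by
  rcases le_total b a with hba | hab
  · rw [min_eq_right hba, max_eq_left hba]
    exact landau_rpow_le_of_le hγ₁ hγ₂ hb hba hc
  · rw [min_eq_left hab, max_eq_right hab]
    convert landau_rpow_le_of_le hγ₁ hγ₂ ha hab (by linarith) using 1 <;> ring

lemma frob_sq (M : Matrix (Fin 3) (Fin 3) ℝ) : frob M ^ 2 = ∑ i, ∑ j, M i j ^ 2 := by
  have htrace : Matrix.trace (M * Mᵀ) = ∑ i, ∑ j, M i j ^ 2 := by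
    simp [Matrix.trace, Matrix.mul_apply, sq]
  rw [frob, htrace, Real.sq_sqrt (by positivity)]

lemma frob_sigmaMat_sub_sq (γ : ℝ) (X Y : EuclideanSpace ℝ (Fin 3)) :
    frob (sigmaMat γ X - sigmaMat γ Y) ^ 2 =
      2 * (‖X‖ ^ (γ / 2 - 1)) ^ 2 * (‖X‖ ^ 2) ^ 2 + 2 * (‖Y‖ ^ (γ / 2 - 1)) ^ 2 * (‖Y‖ ^ 2) ^ 2 -
        2 * (‖X‖ ^ (γ / 2 - 1) * ‖Y‖ ^ (γ / 2 - 1)) * (‖X‖ ^ 2 * ‖Y‖ ^ 2 + inner ℝ X Y ^ 2) := by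
  have hX : ‖X‖ ^ 2 = X 0 ^ 2 + X 1 ^ 2 + X 2 ^ 2 := by
    simp [EuclideanSpace.norm_sq_eq, Fin.sum_univ_three]
  have hY : ‖Y‖ ^ 2 = Y 0 ^ 2 + Y 1 ^ 2 + Y 2 ^ 2 := by
    simp [EuclideanSpace.norm_sq_eq, Fin.sum_univ_three]
  have hXY : inner ℝ X Y = X 0 * Y 0 + X 1 * Y 1 + X 2 * Y 2 := by
    simp only [PiLp.inner_apply, RCLike.inner_apply, Real.ringHom_apply, Fin.sum_univ_three]
    ring
  rw [frob_sq]
  simp only [sigmaMat, Matrix.sub_apply, Matrix.smul_apply, Matrix.one_apply, Matrix.of_apply,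
    smul_eq_mul, Fin.sum_univ_three, Fin.reduceEq, if_true, if_false]
  rw [hX, hY, hXY]
  ring

lemma inner_sub_bKer_sub (γ : ℝ) (X Y : EuclideanSpace ℝ (Fin 3)) :
    inner ℝ (X - Y) (bKer γ X - bKer γ Y) =
      2 * (‖X‖ ^ γ + ‖Y‖ ^ γ) * inner ℝ X Y - 2 * ‖X‖ ^ γ * ‖X‖ ^ 2 - 2 * ‖Y‖ ^ γ * ‖Y‖ ^ 2 := by
  simp only [bKer, inner_sub_left, inner_sub_right, inner_smul_right, real_inner_self_eq_norm_sq,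
    real_inner_comm X Y]
  ring

lemma rpow_half_sub_one_sq_mul {a : ℝ} (ha : 0 < a) (γ : ℝ) :
    (a ^ (γ / 2 - 1)) ^ 2 * (a ^ 2) ^ 2 = a ^ γ * a ^ 2 := by
  rw [Real.rpow_sub ha, Real.rpow_one, div_pow, rpow_half_sq ha.le]
  field_simp

lemma inner_sub_bKer_sub_add_frob_sq {γ : ℝ} {X Y : EuclideanSpace ℝ (Fin 3)} (hX : X ≠ 0)
    (hY : Y ≠ 0) :
    inner ℝ (X - Y) (bKer γ X - bKer γ Y) + frob (sigmaMat γ X - sigmaMat γ Y) ^ 2 =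
      2 * (‖X‖ ^ γ + ‖Y‖ ^ γ) * inner ℝ X Y -
        2 * (‖X‖ ^ (γ / 2 - 1) * ‖Y‖ ^ (γ / 2 - 1)) * (‖X‖ ^ 2 * ‖Y‖ ^ 2 + inner ℝ X Y ^ 2) := by
  rw [inner_sub_bKer_sub, frob_sigmaMat_sub_sq]
  linear_combination 2 * rpow_half_sub_one_sq_mul (norm_pos_iff.2 hX) γ +
    2 * rpow_half_sub_one_sq_mul (norm_pos_iff.2 hY) γ

/-- for `γ ∈ (-2,0)` and all nonzero `X, Y ∈ ℝ³`,
`(X − Y)·(b(X) − b(Y)) + ‖σ(X) − σ(Y)‖² ≤ 2 |X − Y|² (min(|X|,|Y|))^{1+γ} / max(|X|,|Y|)`. -/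
theorem statement7 (γ : ℝ) (hγ : γ ∈ Set.Ioo (-2 : ℝ) 0)
    (X Y : EuclideanSpace ℝ (Fin 3)) (hX : X ≠ 0) (hY : Y ≠ 0) :
    (inner ℝ (X - Y) (bKer γ X - bKer γ Y) : ℝ) + frob (sigmaMat γ X - sigmaMat γ Y) ^ 2 ≤
      2 * ‖X - Y‖ ^ 2 * (min ‖X‖ ‖Y‖) ^ (1 + γ) / max ‖X‖ ‖Y‖ := by
  rw [inner_sub_bKer_sub_add_frob_sq hX hY, norm_sub_sq_real]
  convert landau_rpow_le hγ.1.le hγ.2.le (norm_pos_iff.2 hX) (norm_pos_iff.2 hY)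
    (real_inner_le_norm X Y) using 2
  ring
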